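/- arXiv:1911.03266 — 2 statements merged into one kernel-verified Lean document; each statement's English description precedes it below -/
import Mathlib

section
/- Let Φ : ℝ → ℝ be convex and differentiable with Φ(0) = 0, let w : Ω → [0,∞) and b : Ω → ℝ be bounded measurable functions, and let x ∈ Ω be such that Λ(w b)(x), Λ(w·(Φ∘b))(x) and Λw(x) are all defined by absolutely convergent integrals. Then Φ'(b(x)) Λ(w b)(x) − Λ(w·(Φ∘b))(x) = (Λw)(x) · ( b(x) Φ'(b(x)) − Φ(b(x)) ) + D_Φ(x), where D_Φ(x) := c₁ ∫₀^∞ t^(−3/2) ∫_Ω w(y) H(t,x,y) [ Φ(b(y)) − Φ(b(x)) − Φ'(b(x)) (b(y) − b(x)) ] dy dt has a nonnegative integrand (by convexity of Φ), so D_Φ(x) ≥ 0; in particular Φ'(b(x)) Λ(w b)(x) − Λ(w·(Φ∘b))(x) ≥ (Λw)(x) ( b(x)Φ'(b(x)) − Φ(b(x)) ). -/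
open MeasureTheory Set
open scoped ENNReal RealInnerProductSpace

/-- The normalizing constant `c₁ = (∫₀^∞ (1 − e^(−τ)) τ^(−3/2) dτ)⁻¹`. -/
noncomputable def cOne : ℝ :=
  (∫ τ in Set.Ioi (0:ℝ), (1 - Real.exp (-τ)) * τ ^ (-(3:ℝ)/2))⁻¹

/-- `(Λf)(x) = c₁ ∫₀^∞ t^(−3/2) ( f(x) − ∫_Ω H(t,x,y) f(y) dy ) dt`,
the square root of the Dirichlet Laplacian when `H` is the Dirichlet heat kernel of `Ω`. -/
noncomputable def Lam {d : ℕ} (Ω : Set (EuclideanSpace ℝ (Fin d)))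
    (H : ℝ → EuclideanSpace ℝ (Fin d) → EuclideanSpace ℝ (Fin d) → ℝ)
    (f : EuclideanSpace ℝ (Fin d) → ℝ) (x : EuclideanSpace ℝ (Fin d)) : ℝ :=
  cOne * ∫ t in Set.Ioi (0:ℝ), t ^ (-(3:ℝ)/2) * (f x - ∫ y in Ω, H t x y * f y)

/-- `Λf(x)` is defined by absolutely convergent integrals. -/
def LamDefined {d : ℕ} (Ω : Set (EuclideanSpace ℝ (Fin d)))
    (H : ℝ → EuclideanSpace ℝ (Fin d) → EuclideanSpace ℝ (Fin d) → ℝ)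
    (f : EuclideanSpace ℝ (Fin d) → ℝ) (x : EuclideanSpace ℝ (Fin d)) : Prop :=
  (∀ t ∈ Set.Ioi (0:ℝ), IntegrableOn (fun y => H t x y * f y) Ω) ∧
    IntegrableOn (fun t : ℝ => t ^ (-(3:ℝ)/2) * (f x - ∫ y in Ω, H t x y * f y)) (Set.Ioi 0)

lemma bregman_nonneg (Φ Φ' : ℝ → ℝ) (hΦconv : ConvexOn ℝ Set.univ Φ)
    (hΦd : ∀ s, HasDerivAt Φ (Φ' s) s) (s a : ℝ) :
    0 ≤ Φ a - Φ s - Φ' s * (a - s) := by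
  rcases lt_trichotomy s a with h | h | h
  · have := hΦconv.le_slope_of_hasDerivAt (mem_univ s) (mem_univ a) h (hΦd s)
    rw [slope_def_field] at this
    have h' : 0 < a - s := by linarith
    nlinarith [(le_div_iff₀ h').1 this]
  · simp [h]
  · have := hΦconv.slope_le_of_hasDerivAt (mem_univ a) (mem_univ s) h (hΦd s)
    rw [slope_def_field] at this
    have h' : 0 < s - a := by linarith
    nlinarith [(div_le_iff₀ h').1 this]

/-- weighted Córdoba–Córdoba identity, Lemma `wcordoba`. For convex
differentiable `Φ` with `Φ(0) = 0`, bounded measurable `w ≥ 0` and `b`, and a point `x`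
where the relevant integrals converge absolutely,
`Φ'(b(x)) Λ(wb)(x) − Λ(wΦ(b))(x) = (Λw)(x)(b(x)Φ'(b(x)) − Φ(b(x))) + D_Φ(x)` with
`D_Φ(x) ≥ 0`; in particular the left side dominates `(Λw)(x)(b(x)Φ'(b(x)) − Φ(b(x)))`. -/
theorem stmt5 (d : ℕ) (Ω : Set (EuclideanSpace ℝ (Fin d))) (hΩ : IsOpen Ω)
    (H : ℝ → EuclideanSpace ℝ (Fin d) → EuclideanSpace ℝ (Fin d) → ℝ)
    (hHpos : ∀ t x y, 0 ≤ H t x y)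
    (hHmeas : ∀ t x, Measurable (H t x))
    (Φ Φ' : ℝ → ℝ) (hΦconv : ConvexOn ℝ Set.univ Φ)
    (hΦd : ∀ s, HasDerivAt Φ (Φ' s) s) (hΦ0 : Φ 0 = 0)
    (w b : EuclideanSpace ℝ (Fin d) → ℝ)
    (hwpos : ∀ x, 0 ≤ w x) (hwm : Measurable w) (hbm : Measurable b)
    (hwbd : ∃ C, ∀ x, |w x| ≤ C) (hbbd : ∃ C, ∀ x, |b x| ≤ C)
    (x : EuclideanSpace ℝ (Fin d))
    (h1 : LamDefined Ω H (fun y => w y * b y) x)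
    (h2 : LamDefined Ω H (fun y => w y * Φ (b y)) x)
    (h3 : LamDefined Ω H w x)
    (DPhi : ℝ)
    (hD : DPhi = cOne * ∫ t in Set.Ioi (0:ℝ), t ^ (-(3:ℝ)/2) *
        ∫ y in Ω, w y * H t x y * (Φ (b y) - Φ (b x) - Φ' (b x) * (b y - b x))) :
    0 ≤ DPhi ∧
    Φ' (b x) * Lam Ω H (fun y => w y * b y) x - Lam Ω H (fun y => w y * Φ (b y)) x
      = Lam Ω H w x * (b x * Φ' (b x) - Φ (b x)) + DPhi ∧
    Lam Ω H w x * (b x * Φ' (b x) - Φ (b x))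
      ≤ Φ' (b x) * Lam Ω H (fun y => w y * b y) x - Lam Ω H (fun y => w y * Φ (b y)) x := by
  obtain ⟨h1a, h1b⟩ := h1
  obtain ⟨h2a, h2b⟩ := h2
  obtain ⟨h3a, h3b⟩ := h3
  have hc : 0 ≤ cOne := by
    apply inv_nonneg.mpr
    apply setIntegral_nonneg measurableSet_Ioi
    intro τ hτ
    have h1 : Real.exp (-τ) ≤ 1 := Real.exp_le_one_iff.mpr (by linarith [mem_Ioi.1 hτ])
    exact mul_nonneg (by linarith) (Real.rpow_nonneg (le_of_lt (mem_Ioi.1 hτ)) _)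
  -- nonnegativity of DPhi
  have hDnn : 0 ≤ DPhi := by
    rw [hD]
    apply mul_nonneg hc
    apply setIntegral_nonneg measurableSet_Ioi
    intro t ht
    apply mul_nonneg (Real.rpow_nonneg (le_of_lt (mem_Ioi.1 ht)) _)
    apply setIntegral_nonneg hΩ.measurableSet
    intro y _
    exact mul_nonneg (mul_nonneg (hwpos y) (hHpos t x y))
      (bregman_nonneg Φ Φ' hΦconv hΦd (b x) (b y))
  -- inner integral identity
  have key : ∀ t ∈ Ioi (0:ℝ),
      (∫ y in Ω, w y * H t x y * (Φ (b y) - Φ (b x) - Φ' (b x) * (b y - b x)))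
        = (∫ y in Ω, H t x y * (w y * Φ (b y)))
          - Φ' (b x) * (∫ y in Ω, H t x y * (w y * b y))
          + (b x * Φ' (b x) - Φ (b x)) * (∫ y in Ω, H t x y * w y) := by
    intro t ht
    have i1 : IntegrableOn (fun y => H t x y * (w y * b y)) Ω := h1a t ht
    have i2 : IntegrableOn (fun y => H t x y * (w y * Φ (b y))) Ω := h2a t ht
    have i3 : IntegrableOn (fun y => H t x y * w y) Ω := h3a t ht
    have hf : (fun y => w y * H t x y * (Φ (b y) - Φ (b x) - Φ' (b x) * (b y - b x)))
        = fun y => (H t x y * (w y * Φ (b y)) - Φ' (b x) * (H t x y * (w y * b y)))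
          + (b x * Φ' (b x) - Φ (b x)) * (H t x y * w y) := by
      funext y; ring
    have i1c : Integrable (fun y => Φ' (b x) * (H t x y * (w y * b y)))
        (volume.restrict Ω) := i1.const_mul _
    have i12 : Integrable (fun y => H t x y * (w y * Φ (b y))
        - Φ' (b x) * (H t x y * (w y * b y))) (volume.restrict Ω) := i2.sub i1c
    have i3c : Integrable (fun y => (b x * Φ' (b x) - Φ (b x)) * (H t x y * w y))
        (volume.restrict Ω) := i3.const_mul _
    rw [hf, integral_add i12 i3c, integral_sub i2 i1c, integral_const_mul, integral_const_mul]
  -- outer integral identity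
  have hI : (∫ t in Ioi (0:ℝ), t ^ (-(3:ℝ)/2) *
        ∫ y in Ω, w y * H t x y * (Φ (b y) - Φ (b x) - Φ' (b x) * (b y - b x)))
      = Φ' (b x) * (∫ t in Ioi (0:ℝ), t ^ (-(3:ℝ)/2)
            * (w x * b x - ∫ y in Ω, H t x y * (w y * b y)))
        - (∫ t in Ioi (0:ℝ), t ^ (-(3:ℝ)/2)
            * (w x * Φ (b x) - ∫ y in Ω, H t x y * (w y * Φ (b y))))
        - (b x * Φ' (b x) - Φ (b x)) * (∫ t in Ioi (0:ℝ), t ^ (-(3:ℝ)/2)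
            * (w x - ∫ y in Ω, H t x y * w y)) := by
    have if1 : Integrable (fun t : ℝ => t ^ (-(3:ℝ)/2)
        * (w x * b x - ∫ y in Ω, H t x y * (w y * b y))) (volume.restrict (Ioi 0)) := h1b
    have if2 : Integrable (fun t : ℝ => t ^ (-(3:ℝ)/2)
        * (w x * Φ (b x) - ∫ y in Ω, H t x y * (w y * Φ (b y)))) (volume.restrict (Ioi 0)) := h2b
    have if3 : Integrable (fun t : ℝ => t ^ (-(3:ℝ)/2)
        * (w x - ∫ y in Ω, H t x y * w y)) (volume.restrict (Ioi 0)) := h3b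
    have step : (∫ t in Ioi (0:ℝ), t ^ (-(3:ℝ)/2) *
          ∫ y in Ω, w y * H t x y * (Φ (b y) - Φ (b x) - Φ' (b x) * (b y - b x)))
        = ∫ t in Ioi (0:ℝ),
            (Φ' (b x) * (t ^ (-(3:ℝ)/2) * (w x * b x - ∫ y in Ω, H t x y * (w y * b y)))
            - t ^ (-(3:ℝ)/2) * (w x * Φ (b x) - ∫ y in Ω, H t x y * (w y * Φ (b y)))
            - (b x * Φ' (b x) - Φ (b x)) * (t ^ (-(3:ℝ)/2)
                * (w x - ∫ y in Ω, H t x y * w y))) := by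
      refine setIntegral_congr_fun measurableSet_Ioi fun t ht => ?_
      rw [key t ht]; ring
    have jf1 : Integrable (fun t : ℝ => Φ' (b x) * (t ^ (-(3:ℝ)/2)
        * (w x * b x - ∫ y in Ω, H t x y * (w y * b y)))) (volume.restrict (Ioi 0)) :=
      if1.const_mul _
    have jf12 : Integrable (fun t : ℝ => Φ' (b x) * (t ^ (-(3:ℝ)/2)
          * (w x * b x - ∫ y in Ω, H t x y * (w y * b y)))
        - t ^ (-(3:ℝ)/2) * (w x * Φ (b x) - ∫ y in Ω, H t x y * (w y * Φ (b y))))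
        (volume.restrict (Ioi 0)) := jf1.sub if2
    have jf3 : Integrable (fun t : ℝ => (b x * Φ' (b x) - Φ (b x)) * (t ^ (-(3:ℝ)/2)
        * (w x - ∫ y in Ω, H t x y * w y))) (volume.restrict (Ioi 0)) := if3.const_mul _
    rw [step, integral_sub jf12 jf3, integral_sub jf1 if2, integral_const_mul,
      integral_const_mul]
  have E : DPhi = Φ' (b x) * Lam Ω H (fun y => w y * b y) x
      - Lam Ω H (fun y => w y * Φ (b y)) x
      - Lam Ω H w x * (b x * Φ' (b x) - Φ (b x)) := by
    rw [hD, hI]; unfold Lam; ring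
  exact ⟨hDnn, by linarith, by linarith⟩
end

section
/- Assume additionally that ∫_Ω H(t,x,y) dy ≤ min(1, C₀ d(x)/√t) for all t > 0 and x ∈ Ω, for some constant C₀ ≥ 1. Then there exists γ > 0 depending only on C₀ such that for every convex differentiable Φ : ℝ → ℝ with Φ(0) = 0, every bounded measurable f : Ω → ℝ, and every x ∈ Ω at which Λf(x) and Λ(Φ∘f)(x) are defined by absolutely convergent integrals, one has Φ'(f(x)) (Λf)(x) − (Λ(Φ∘f))(x) ≥ (γ/d(x)) · ( f(x) Φ'(f(x)) − Φ(f(x)) ), and the right-hand side is nonnegative. -/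
open MeasureTheory Set
open scoped ENNReal RealInnerProductSpace

/-!
Convexity puts `Φ` above its tangent line at `a = f x`; integrating this against the kernel gives,
at every time `t`, `Φ'(a) (a - ∫ H f) - (Φ(a) - ∫ H (Φ ∘ f)) ≥ (1 - ∫ H) (a Φ'(a) - Φ(a))`, and
`a Φ'(a) - Φ(a) ≥ 0` is the tangent inequality at `0`. The mass bound forces `1 - ∫ H ≥ 1/2` once
`√t ≥ 2 C₀ d(x)`, and `∫_{(2 C₀ d(x))²}^∞ t^(-3/2) dt = 1 / (C₀ d(x))`, whence `γ = c₁ / (2 C₀)`.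
-/

theorem ConvexOn.add_mul_sub_le_of_hasDerivAt {Φ : ℝ → ℝ} {a Φ'a : ℝ}
    (hΦ : ConvexOn ℝ univ Φ) (hΦa : HasDerivAt Φ Φ'a a) (b : ℝ) :
    Φ a + Φ'a * (b - a) ≤ Φ b := by
  rcases lt_trichotomy a b with hab | rfl | hba
  · have h := hΦ.le_slope_of_hasDerivAt (mem_univ a) (mem_univ b) hab hΦa
    rw [slope_def_field, le_div_iff₀ (sub_pos.2 hab)] at h
    linarith
  · simp
  · have h := hΦ.slope_le_of_hasDerivAt (mem_univ b) (mem_univ a) hba hΦa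
    rw [slope_def_field, div_le_iff₀ (sub_pos.2 hba)] at h
    linarith

theorem ConvexOn.mul_sub_nonneg_of_hasDerivAt {Φ : ℝ → ℝ} {a Φ'a : ℝ}
    (hΦ : ConvexOn ℝ univ Φ) (hΦa : HasDerivAt Φ Φ'a a) (hΦ0 : Φ 0 = 0) :
    0 ≤ a * Φ'a - Φ a := by
  have h := hΦ.add_mul_sub_le_of_hasDerivAt hΦa 0
  rw [hΦ0] at h
  linarith

theorem one_sub_integral_mul_le_of_convexOn {α : Type*} [MeasurableSpace α] {μ : Measure α}
    {Φ : ℝ → ℝ} {a Φ'a : ℝ} (hΦ : ConvexOn ℝ univ Φ) (hΦa : HasDerivAt Φ Φ'a a)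
    {k u : α → ℝ} (hk : ∀ y, 0 ≤ k y) (hk_int : Integrable k μ)
    (hku : Integrable (fun y => k y * u y) μ) (hkΦu : Integrable (fun y => k y * Φ (u y)) μ) :
    (1 - ∫ y, k y ∂μ) * (a * Φ'a - Φ a)
      ≤ Φ'a * (a - ∫ y, k y * u y ∂μ) - (Φ a - ∫ y, k y * Φ (u y) ∂μ) := by
  have htangent_int : Integrable (fun y => (Φ a - Φ'a * a) * k y + Φ'a * (k y * u y)) μ :=
    (hk_int.const_mul _).add (hku.const_mul _)
  have htangent : ∫ y, (Φ a - Φ'a * a) * k y + Φ'a * (k y * u y) ∂μ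
      ≤ ∫ y, k y * Φ (u y) ∂μ := by
    refine integral_mono htangent_int hkΦu fun y => ?_
    have := mul_le_mul_of_nonneg_left (hΦ.add_mul_sub_le_of_hasDerivAt hΦa (u y)) (hk y)
    linarith
  rw [integral_add (hk_int.const_mul _) (hku.const_mul _), integral_const_mul,
    integral_const_mul] at htangent
  linarith

theorem integral_Ioi_rpow_neg_three_halves {T : ℝ} (hT : 0 < T) :
    ∫ t in Ioi T, t ^ (-(3:ℝ)/2) = 2 / √T := by
  rw [integral_Ioi_rpow_of_lt (by norm_num) hT, show -(3:ℝ)/2 + 1 = -(1/2) by norm_num,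
    Real.rpow_neg hT.le, ← Real.sqrt_eq_rpow]
  ring

theorem div_le_integral_of_mass_le {h m : ℝ → ℝ} {A C δ : ℝ} (hA : 0 ≤ A) (hC : 0 < C)
    (hδ : 0 ≤ δ) (hh : IntegrableOn h (Ioi 0)) (hm : ∀ t > 0, m t ≤ min 1 (C * δ / √t))
    (hlow : ∀ t > 0, t ^ (-(3:ℝ)/2) * ((1 - m t) * A) ≤ h t) :
    A / (2 * C * δ) ≤ ∫ t in Ioi 0, h t := by
  have h_nonneg : ∀ t ∈ Ioi (0:ℝ), 0 ≤ h t := fun t (ht : 0 < t) =>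
    (mul_nonneg (Real.rpow_nonneg ht.le _)
      (mul_nonneg (sub_nonneg.2 ((hm t ht).trans (min_le_left _ _))) hA)).trans (hlow t ht)
  rcases hδ.eq_or_lt with rfl | hδ
  · simpa using setIntegral_nonneg measurableSet_Ioi h_nonneg
  set T := (2 * C * δ) ^ 2
  have hT : 0 < T := by positivity
  have hsqrtT : √T = 2 * C * δ := Real.sqrt_sq (by positivity)
  have h_tail : ∀ t ∈ Ioi T, t ^ (-(3:ℝ)/2) * (A / 2) ≤ h t := by
    intro t (hTt : T < t)
    have ht : 0 < t := hT.trans hTt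
    have hsqrt : 2 * C * δ < √t := hsqrtT ▸ Real.sqrt_lt_sqrt hT.le hTt
    have hhalf : m t ≤ 1 / 2 := by
      refine (hm t ht).trans ((min_le_right _ _).trans ?_)
      rw [div_le_iff₀ (by positivity)]
      linarith
    refine le_trans ?_ (hlow t ht)
    gcongr
    nlinarith
  calc A / (2 * C * δ) = ∫ t in Ioi T, t ^ (-(3:ℝ)/2) * (A / 2) := by
        rw [integral_mul_const, integral_Ioi_rpow_neg_three_halves hT, hsqrtT]
        field_simp
    _ ≤ ∫ t in Ioi T, h t :=
        setIntegral_mono_on ((integrableOn_Ioi_rpow_of_lt (by norm_num) hT).mul_const _)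
          (hh.mono_set (Ioi_subset_Ioi hT.le)) measurableSet_Ioi h_tail
    _ ≤ ∫ t in Ioi 0, h t :=
        setIntegral_mono_set hh ((ae_restrict_mem measurableSet_Ioi).mono h_nonneg)
          (Ioi_subset_Ioi hT.le).eventuallyLE

theorem integrableOn_one_sub_exp_neg_mul_rpow :
    IntegrableOn (fun τ : ℝ => (1 - Real.exp (-τ)) * τ ^ (-(3:ℝ)/2)) (Ioi 0) := by
  have hmeas : ∀ s : Set ℝ, AEStronglyMeasurable
      (fun τ : ℝ => (1 - Real.exp (-τ)) * τ ^ (-(3:ℝ)/2)) (volume.restrict s) :=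
    fun s => by fun_prop
  have hnorm : ∀ τ : ℝ, 0 < τ → ‖(1 - Real.exp (-τ)) * τ ^ (-(3:ℝ)/2)‖
      = (1 - Real.exp (-τ)) * τ ^ (-(3:ℝ)/2) := fun τ hτ =>
    Real.norm_of_nonneg (mul_nonneg (by simp [hτ.le]) (Real.rpow_nonneg hτ.le _))
  -- near `0` use `1 - e^(-τ) ≤ τ`, near `∞` use `1 - e^(-τ) ≤ 1`
  have h_Ioc : IntegrableOn (fun τ : ℝ => (1 - Real.exp (-τ)) * τ ^ (-(3:ℝ)/2)) (Ioc 0 1) := by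
    have hbound : IntegrableOn (fun τ : ℝ => τ ^ (-(1:ℝ)/2)) (Ioc 0 1) :=
      (intervalIntegrable_iff_integrableOn_Ioc_of_le zero_le_one).1
        (intervalIntegral.intervalIntegrable_rpow' (by norm_num))
    refine hbound.integrable.mono' (hmeas _) ?_
    filter_upwards [ae_restrict_mem measurableSet_Ioc] with τ ⟨hτ, _⟩
    rw [hnorm τ hτ, show -(1:ℝ)/2 = 1 + -(3:ℝ)/2 by norm_num, Real.rpow_add hτ, Real.rpow_one]
    gcongr
    linarith [Real.add_one_le_exp (-τ)]
  have h_Ioi : IntegrableOn (fun τ : ℝ => (1 - Real.exp (-τ)) * τ ^ (-(3:ℝ)/2)) (Ioi 1) := by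
    have hbound : IntegrableOn (fun τ : ℝ => τ ^ (-(3:ℝ)/2)) (Ioi 1) :=
      integrableOn_Ioi_rpow_of_lt (by norm_num) one_pos
    refine hbound.integrable.mono' (hmeas _) ?_
    filter_upwards [ae_restrict_mem measurableSet_Ioi] with τ (hτ : 1 < τ)
    rw [hnorm τ (one_pos.trans hτ)]
    exact mul_le_of_le_one_left (Real.rpow_nonneg (by linarith) _)
      (sub_le_self _ (Real.exp_pos _).le)
  simpa [Ioc_union_Ioi_eq_Ioi zero_le_one] using h_Ioc.union h_Ioi

theorem cOne_pos : 0 < cOne := by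
  refine inv_pos.2 ((setIntegral_pos_iff_support_of_nonneg_ae ?_
    integrableOn_one_sub_exp_neg_mul_rpow).2 ?_)
  · filter_upwards [ae_restrict_mem measurableSet_Ioi] with τ (hτ : 0 < τ)
    exact mul_nonneg (by simp [hτ.le]) (Real.rpow_nonneg hτ.le _)
  · refine lt_of_lt_of_le (by simp) (measure_mono fun τ hτ => ⟨?_, hτ⟩)
    exact (mul_pos (by simpa using hτ) (Real.rpow_pos_of_pos hτ _)).ne'

section Lam

variable {d : ℕ}

noncomputable def lamIntegrand (Ω : Set (EuclideanSpace ℝ (Fin d)))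
    (H : ℝ → EuclideanSpace ℝ (Fin d) → EuclideanSpace ℝ (Fin d) → ℝ)
    (f : EuclideanSpace ℝ (Fin d) → ℝ) (x : EuclideanSpace ℝ (Fin d)) (t : ℝ) : ℝ :=
  t ^ (-(3:ℝ)/2) * (f x - ∫ y in Ω, H t x y * f y)

variable {Ω : Set (EuclideanSpace ℝ (Fin d))}
  {H : ℝ → EuclideanSpace ℝ (Fin d) → EuclideanSpace ℝ (Fin d) → ℝ}
  {x : EuclideanSpace ℝ (Fin d)}

theorem LamDefined.integrableOn_lamIntegrand {f : EuclideanSpace ℝ (Fin d) → ℝ}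
    (hf : LamDefined Ω H f x) : IntegrableOn (lamIntegrand Ω H f x) (Ioi 0) :=
  hf.2

theorem mul_Lam_sub_Lam {f g : EuclideanSpace ℝ (Fin d) → ℝ} (c : ℝ)
    (hf : LamDefined Ω H f x) (hg : LamDefined Ω H g x) :
    c * Lam Ω H f x - Lam Ω H g x
      = cOne * ∫ t in Ioi 0, c * lamIntegrand Ω H f x t - lamIntegrand Ω H g x t := by
  rw [integral_sub (hf.integrableOn_lamIntegrand.const_mul c) hg.integrableOn_lamIntegrand,
    integral_const_mul]
  simp only [Lam, lamIntegrand]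
  ring

theorem mul_lamIntegrand_sub_lamIntegrand_ge {Φ Φ' : ℝ → ℝ} (hΦ : ConvexOn ℝ univ Φ)
    {f : EuclideanSpace ℝ (Fin d) → ℝ} (hΦ' : HasDerivAt Φ (Φ' (f x)) (f x))
    (hf : LamDefined Ω H f x) (hΦf : LamDefined Ω H (fun y => Φ (f y)) x) {t : ℝ} (ht : 0 < t)
    (hHt_nonneg : ∀ y, 0 ≤ H t x y) (hHt : IntegrableOn (H t x) Ω) :
    t ^ (-(3:ℝ)/2) * ((1 - ∫ y in Ω, H t x y) * (f x * Φ' (f x) - Φ (f x)))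
      ≤ Φ' (f x) * lamIntegrand Ω H f x t - lamIntegrand Ω H (fun y => Φ (f y)) x t := by
  have h := one_sub_integral_mul_le_of_convexOn hΦ hΦ' hHt_nonneg hHt (hf.1 t ht) (hΦf.1 t ht)
  calc _ ≤ t ^ (-(3:ℝ)/2) * (Φ' (f x) * (f x - ∫ y in Ω, H t x y * f y)
        - (Φ (f x) - ∫ y in Ω, H t x y * Φ (f y))) := by
        gcongr
    _ = _ := by
        simp only [lamIntegrand]
        ring

end Lam

/-- boundary-repulsive Córdoba–Córdoba inequality, case `s = 1`.
Under the heat-kernel mass bound `∫_Ω H(t,x,·) ≤ min(1, C₀ d(x)/√t)`, there is `γ > 0`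
depending only on `C₀` such that for convex differentiable `Φ` with `Φ(0) = 0` and bounded
measurable `f`, at every point where the integrals converge absolutely,
`Φ'(f(x)) Λf(x) − Λ(Φ∘f)(x) ≥ (γ/d(x)) (f(x)Φ'(f(x)) − Φ(f(x))) ≥ 0`. -/
theorem stmt6 (C₀ : ℝ) (hC₀ : 1 ≤ C₀) :
    ∃ γ : ℝ, 0 < γ ∧
      ∀ (d : ℕ) (Ω : Set (EuclideanSpace ℝ (Fin d))), IsOpen Ω →
      ∀ H : ℝ → EuclideanSpace ℝ (Fin d) → EuclideanSpace ℝ (Fin d) → ℝ,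
        (∀ t x y, 0 ≤ H t x y) →
        (∀ t > (0:ℝ), ∀ x ∈ Ω, IntegrableOn (fun y => H t x y) Ω ∧
          (∫ y in Ω, H t x y) ≤ min 1 (C₀ * Metric.infDist x Ωᶜ / Real.sqrt t)) →
      ∀ (Φ Φ' : ℝ → ℝ), ConvexOn ℝ Set.univ Φ → (∀ s, HasDerivAt Φ (Φ' s) s) → Φ 0 = 0 →
      ∀ f : EuclideanSpace ℝ (Fin d) → ℝ, Measurable f → (∃ C, ∀ x, |f x| ≤ C) →
      ∀ x ∈ Ω, LamDefined Ω H f x → LamDefined Ω H (fun y => Φ (f y)) x →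
        0 ≤ f x * Φ' (f x) - Φ (f x) ∧
        γ / Metric.infDist x Ωᶜ * (f x * Φ' (f x) - Φ (f x))
          ≤ Φ' (f x) * Lam Ω H f x - Lam Ω H (fun y => Φ (f y)) x := by
  have hC₀_pos : 0 < C₀ := one_pos.trans_le hC₀
  refine ⟨cOne / (2 * C₀), div_pos cOne_pos (by positivity), ?_⟩
  intro d Ω _ H hH hmass Φ Φ' hΦ hΦ' hΦ0 f _ _ x hx hf hΦf
  have hA := hΦ.mul_sub_nonneg_of_hasDerivAt (hΦ' (f x)) hΦ0
  refine ⟨hA, ?_⟩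
  have hbound := div_le_integral_of_mass_le hA hC₀_pos Metric.infDist_nonneg
    ((hf.integrableOn_lamIntegrand.const_mul (Φ' (f x))).sub hΦf.integrableOn_lamIntegrand)
    (fun t ht => (hmass t ht x hx).2)
    (fun t ht => mul_lamIntegrand_sub_lamIntegrand_ge hΦ (hΦ' (f x)) hf hΦf ht (hH t x)
      (hmass t ht x hx).1)
  rw [mul_Lam_sub_Lam _ hf hΦf]
  calc cOne / (2 * C₀) / Metric.infDist x Ωᶜ * (f x * Φ' (f x) - Φ (f x))
      = cOne * ((f x * Φ' (f x) - Φ (f x)) / (2 * C₀ * Metric.infDist x Ωᶜ)) := by ring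
    _ ≤ _ := mul_le_mul_of_nonneg_left hbound cOne_pos.le
end
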